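/- Let n, λ, t be positive integers and r₁, …, r_t non-negative integers with ∑_{j=1}^t r_j ≤ λ·n(n−1)/2. Then there exists a partial decomposition of λK_n into t colors such that color j uses exactly r_j edges and the decomposition is almost regular, i.e., for every color j and all vertices x, y, the degrees of x and y in color class j differ by at most 1. -/
import Mathlib


/-- Degree of a vertex in a multigraph given by an edge-multiplicity function. -/
def deg {V : Type*} [Fintype V] (c : V → V → ℕ) (v : V) : ℕ := ∑ u, c v u

namespace Stmt10
set_option linter.unusedSectionVars false

variable {n T lam : ℕ}

def Ok (lam : ℕ) (G : Fin (T+1) → Fin n → Fin n → ℕ) : Prop :=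
  (∀ c u v, G c u v = G c v u) ∧ (∀ c v, G c v v = 0) ∧
  (∀ u v : Fin n, u ≠ v → ∑ c, G c u v = lam)

def siz (G : Fin (T+1) → Fin n → Fin n → ℕ) (c : Fin (T+1)) : ℕ := ∑ u, ∑ v, G c u v

def Bal (c : Fin n → Fin n → ℕ) : Prop := ∀ x y, deg c x ≤ deg c y + 1

def bump (x y : Fin n) : Fin n → Fin n → ℕ :=
  fun u v => if (u = x ∧ v = y) ∨ (u = y ∧ v = x) then 1 else 0

lemma bump_symm (x y u v : Fin n) : bump x y u v = bump x y v u := by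
  unfold bump; exact if_congr (by tauto) rfl rfl

lemma bump_diag (x y v : Fin n) (hxy : x ≠ y) : bump x y v v = 0 := by
  unfold bump
  rw [if_neg]
  rintro (⟨h1, h2⟩ | ⟨h1, h2⟩) <;> exact hxy (by rw [← h1, ← h2])

lemma bump_eq (x y u v : Fin n) (hxy : x ≠ y) :
    bump x y v u = (if v = x then (if u = y then 1 else 0) else 0)
      + (if v = y then (if u = x then 1 else 0) else 0) := by
  unfold bump
  split_ifs <;> simp_all

lemma bump_row (x y v : Fin n) (hxy : x ≠ y) :
    ∑ u, bump x y v u = (if v = x then 1 else 0) + (if v = y then 1 else 0) := by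
  by_cases hvx : v = x <;> by_cases hvy : v = y <;>
    simp_all [bump_eq x y _ _ hxy, Finset.sum_add_distrib, Finset.sum_ite_eq']

lemma bump_siz (x y : Fin n) (hxy : x ≠ y) :
    ∑ u, ∑ v, bump x y u v = 2 := by
  have : ∀ u, ∑ v, bump x y u v = (if u = x then 1 else 0) + (if u = y then 1 else 0) :=
    fun u => bump_row x y u hxy
  rw [Finset.sum_congr rfl (fun u _ => this u), Finset.sum_add_distrib]
  simp [Finset.sum_ite_eq', hxy]

/-- recolor one copy of the pair {x,y} from color c₀ to color c₁ -/
def move (G : Fin (T+1) → Fin n → Fin n → ℕ) (c₀ c₁ : Fin (T+1)) (x y : Fin n) :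
    Fin (T+1) → Fin n → Fin n → ℕ :=
  fun c u v => (G c u v + if c = c₁ then bump x y u v else 0) - (if c = c₀ then bump x y u v else 0)

section Move

variable {G : Fin (T+1) → Fin n → Fin n → ℕ} {c₀ c₁ : Fin (T+1)} {x y : Fin n}
variable (hc : c₀ ≠ c₁) (hxy : x ≠ y) (hG : 1 ≤ G c₀ x y)
variable (hsym : ∀ c u v, G c u v = G c v u)

include hxy hG hsym in
lemma bump_le : ∀ u v, bump x y u v ≤ G c₀ u v := by
  intro u v
  unfold bump
  split_ifs with h
  · rcases h with ⟨h1, h2⟩ | ⟨h1, h2⟩ <;> subst h1 <;> subst h2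
    · exact hG
    · rw [hsym]; exact hG
  · exact Nat.zero_le _

include hc hxy hG hsym in
lemma move_add : ∀ c u v, move G c₀ c₁ x y c u v + (if c = c₀ then bump x y u v else 0)
    = G c u v + (if c = c₁ then bump x y u v else 0) := by
  intro c u v
  apply Nat.sub_add_cancel
  by_cases h : c = c₀
  · subst h
    rw [if_pos rfl, if_neg hc]
    simpa using bump_le hxy hG hsym u v
  · rw [if_neg h]; exact Nat.zero_le _

lemma move_eq_of_ne {c : Fin (T+1)} (h0 : c ≠ c₀) (h1 : c ≠ c₁) :
    ∀ u v, move G c₀ c₁ x y c u v = G c u v := by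
  intro u v; unfold move; rw [if_neg h0, if_neg h1]; omega

include hsym in
lemma move_symm : ∀ c u v, move G c₀ c₁ x y c u v = move G c₀ c₁ x y c v u := by
  intro c u v; unfold move; rw [bump_symm x y u v, hsym]

include hxy in
lemma move_loopless (hdiag : ∀ c v, G c v v = 0) : ∀ c v, move G c₀ c₁ x y c v v = 0 := by
  intro c v; unfold move; rw [bump_diag x y v hxy, hdiag]; simp

include hc hxy hG hsym in
lemma move_total : ∀ u v, ∑ c, move G c₀ c₁ x y c u v = ∑ c, G c u v := by
  intro u v
  have h1 : ∑ c, (move G c₀ c₁ x y c u v + (if c = c₀ then bump x y u v else 0))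
      = ∑ c, (G c u v + (if c = c₁ then bump x y u v else 0)) :=
    Finset.sum_congr rfl (fun c _ => move_add hc hxy hG hsym c u v)
  rw [Finset.sum_add_distrib, Finset.sum_add_distrib, Finset.sum_ite_eq',
    Finset.sum_ite_eq'] at h1
  simp only [Finset.mem_univ, if_pos] at h1
  omega

include hc hxy hG hsym in
lemma move_siz : ∀ c, (∑ u, ∑ v, move G c₀ c₁ x y c u v) + (if c = c₀ then 2 else 0)
    = (∑ u, ∑ v, G c u v) + (if c = c₁ then 2 else 0) := by
  intro c
  have h1 : ∑ u, ∑ v, (move G c₀ c₁ x y c u v + (if c = c₀ then bump x y u v else 0))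
      = ∑ u, ∑ v, (G c u v + (if c = c₁ then bump x y u v else 0)) := by
    apply Finset.sum_congr rfl; intro u _
    exact Finset.sum_congr rfl (fun v _ => move_add hc hxy hG hsym c u v)
  simp only [Finset.sum_add_distrib] at h1
  have h2 : ∀ d : Fin (T+1), ∑ u : Fin n, ∑ v : Fin n,
      (if c = d then bump x y u v else 0) = if c = d then 2 else 0 := by
    intro d
    by_cases h : c = d <;> simp [h, bump_siz x y hxy]
  rw [h2 c₀, h2 c₁] at h1
  exact h1

include hc hxy hG hsym in
lemma move_deg : ∀ c v, deg (move G c₀ c₁ x y c) v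
      + (if c = c₀ then ((if v = x then 1 else 0) + (if v = y then 1 else 0)) else 0)
    = deg (G c) v
      + (if c = c₁ then ((if v = x then 1 else 0) + (if v = y then 1 else 0)) else 0) := by
  intro c v
  have h1 : ∑ u, (move G c₀ c₁ x y c v u + (if c = c₀ then bump x y v u else 0))
      = ∑ u, (G c v u + (if c = c₁ then bump x y v u else 0)) :=
    Finset.sum_congr rfl (fun u _ => move_add hc hxy hG hsym c v u)
  simp only [Finset.sum_add_distrib] at h1
  have h2 : ∀ d : Fin (T+1), ∑ u, (if c = d then bump x y v u else 0)
      = if c = d then ((if v = x then 1 else 0) + (if v = y then 1 else 0)) else 0 := by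
    intro d
    by_cases h : c = d <;> simp [h, bump_row x y v hxy]
  rw [h2 c₀, h2 c₁] at h1
  exact h1

lemma move_row_ge {c : Fin (T+1)} (h0 : c ≠ c₀) :
    ∀ u v, G c u v ≤ move G c₀ c₁ x y c u v := by
  intro u v; unfold move; rw [if_neg h0]
  exact Nat.le_sub_of_add_le (by omega)

lemma move_entry_eq {u v : Fin n} (h : ¬((u = x ∧ v = y) ∨ (u = y ∧ v = x))) :
    ∀ c, move G c₀ c₁ x y c u v = G c u v := by
  intro c; unfold move
  have hb : bump x y u v = 0 := by unfold bump; rw [if_neg h]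
  rw [hb]; simp

end Move

/-! ### flip: simultaneous recoloring at a common neighbour -/

/-- color a: one copy (h,w) → (l,w) ; color b: one copy (l,w) → (h,w) -/
def flip (G : Fin (T+1) → Fin n → Fin n → ℕ) (a b : Fin (T+1)) (l h w : Fin n) :
    Fin (T+1) → Fin n → Fin n → ℕ :=
  move (move G a b h w) b a l w

section Flip

variable {G : Fin (T+1) → Fin n → Fin n → ℕ} {a b : Fin (T+1)} {l h w : Fin n}
variable (hab : a ≠ b) (hlh : l ≠ h) (hlw : l ≠ w) (hhw : h ≠ w)
variable (h1 : 1 ≤ G a h w) (h2 : 1 ≤ G b l w)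
variable (hsym : ∀ c u v, G c u v = G c v u)

include hab hlh hlw hhw h1 h2 hsym

lemma M1_lw : 1 ≤ move G a b h w b l w := by
  rw [move_entry_eq (by rintro (⟨e1, _⟩ | ⟨e1, _⟩) <;> [exact hlh e1; exact hlw e1])]
  exact h2

lemma M1_symm : ∀ c u v, move G a b h w c u v = move G a b h w c v u :=
  move_symm hsym

lemma flip_symm : ∀ c u v, flip G a b l h w c u v = flip G a b l h w c v u :=
  move_symm (M1_symm hab hlh hlw hhw h1 h2 hsym)

lemma flip_loopless (hdiag : ∀ c v, G c v v = 0) : ∀ c v, flip G a b l h w c v v = 0 :=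
  move_loopless hlw (move_loopless hhw hdiag)

lemma flip_total : ∀ u v, ∑ c, flip G a b l h w c u v = ∑ c, G c u v := by
  intro u v
  unfold flip
  rw [move_total hab.symm hlw (M1_lw hab hlh hlw hhw h1 h2 hsym)
      (M1_symm hab hlh hlw hhw h1 h2 hsym),
    move_total hab hhw h1 hsym]

lemma flip_siz : ∀ c, ∑ u, ∑ v, flip G a b l h w c u v = ∑ u, ∑ v, G c u v := by
  intro c
  have e1 := move_siz hab hhw h1 hsym c
  have e2 := move_siz hab.symm hlw (M1_lw hab hlh hlw hhw h1 h2 hsym)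
    (M1_symm hab hlh hlw hhw h1 h2 hsym) c
  unfold flip
  omega

lemma flip_eq_of_ne {c : Fin (T+1)} (h0 : c ≠ a) (h3 : c ≠ b) :
    ∀ u v, flip G a b l h w c u v = G c u v := by
  intro u v
  unfold flip
  rw [move_eq_of_ne h3 h0, move_eq_of_ne h0 h3]

lemma flip_deg (c : Fin (T+1)) (v : Fin n) :
      deg (flip G a b l h w c) v
      + (if c = a then (if v = h then 1 else 0) + (if v = w then 1 else 0) else 0)
      + (if c = b then (if v = l then 1 else 0) + (if v = w then 1 else 0) else 0)
    = deg (G c) v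
      + (if c = b then (if v = h then 1 else 0) + (if v = w then 1 else 0) else 0)
      + (if c = a then (if v = l then 1 else 0) + (if v = w then 1 else 0) else 0) := by
  have e1 := move_deg hab hhw h1 hsym c v
  have e2 := move_deg hab.symm hlw (M1_lw hab hlh hlw hhw h1 h2 hsym)
    (M1_symm hab hlh hlw hhw h1 h2 hsym) c v
  unfold flip
  omega

lemma flip_row_b_h : ∀ u, G b h u ≤ flip G a b l h w b h u := by
  intro u
  unfold flip
  rw [move_entry_eq (by rintro (⟨e, _⟩ | ⟨e, _⟩) <;> [exact hlh e.symm; exact hhw e])]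
  exact move_row_ge hab.symm h u

end Flip

/-! ### chains -/

section Chains

variable (l h : Fin n)

def good (G : Fin (T+1) → Fin n → Fin n → ℕ) (c : Fin (T+1)) : Prop :=
  c = 0 ∨ deg (G c) l = deg (G c) h + 1

def stp (G : Fin (T+1) → Fin n → Fin n → ℕ) (i : Fin (T+1)) (w : Fin n) (i' : Fin (T+1)) :
    Prop :=
  w ≠ l ∧ w ≠ h ∧ 1 ≤ G i h w ∧ 1 ≤ G i' l w

def GC (G : Fin (T+1) → Fin n → Fin n → ℕ) : ℕ → Fin (T+1) → Prop
  | 0, i => good l h G i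
  | (m+1), i => ∃ w i', stp l h G i w i' ∧ GC G m i'

lemma persist {G G₁ : Fin (T+1) → Fin n → Fin n → ℕ} (a b : Fin (T+1))
    (hsame : ∀ c, c ≠ a → c ≠ b → G₁ c = G c) :
    ∀ M i, GC l h G M i →
      (∃ M' ≤ M, GC l h G M' a) ∨ (∃ M' ≤ M, GC l h G M' b) ∨
      (i ≠ a ∧ i ≠ b ∧ GC l h G₁ M i) := by
  intro M
  induction M with
  | zero =>
    intro i hgc
    by_cases hia : i = a
    · exact Or.inl ⟨0, le_refl 0, hia ▸ hgc⟩
    by_cases hib : i = b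
    · exact Or.inr (Or.inl ⟨0, le_refl 0, hib ▸ hgc⟩)
    · refine Or.inr (Or.inr ⟨hia, hib, ?_⟩)
      unfold GC good at hgc ⊢
      rwa [hsame i hia hib]
  | succ M ih =>
    intro i hgc
    by_cases hia : i = a
    · exact Or.inl ⟨M+1, le_refl _, hia ▸ hgc⟩
    by_cases hib : i = b
    · exact Or.inr (Or.inl ⟨M+1, le_refl _, hib ▸ hgc⟩)
    obtain ⟨w', i', hstp, htail⟩ := hgc
    rcases ih i' htail with ⟨M', hM', hgc'⟩ | ⟨M', hM', hgc'⟩ | ⟨hi'a, hi'b, hgc'⟩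
    · exact Or.inl ⟨M', le_trans hM' (Nat.le_succ M), hgc'⟩
    · exact Or.inr (Or.inl ⟨M', le_trans hM' (Nat.le_succ M), hgc'⟩)
    · refine Or.inr (Or.inr ⟨hia, hib, w', i', ?_, hgc'⟩)
      obtain ⟨hw1, hw2, hs1, hs2⟩ := hstp
      exact ⟨hw1, hw2, by rwa [hsame i hia hib], by rwa [hsame i' hi'a hi'b]⟩

end Chains

section ChainExists

variable {lam : ℕ} {G : Fin (T+1) → Fin n → Fin n → ℕ} {l h : Fin n} {j : Fin (T+1)}

lemma reach_gc {i : Fin (T+1)}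
    (hri : Relation.ReflTransGen (fun p q => ∃ w, stp l h G p w q) j i)
    (hg : good l h G i) : ∃ m, GC l h G m j := by
  induction hri using Relation.ReflTransGen.head_induction_on with
  | refl => exact ⟨0, hg⟩
  | head hstep _ ih =>
    obtain ⟨m, hm⟩ := ih
    obtain ⟨w, hw⟩ := hstep
    exact ⟨m+1, w, _, hw, hm⟩

lemma chain_exists (hOk : Ok lam G) (hlh : l ≠ h) (hj : j ≠ 0)
    (hgap : deg (G j) l + 2 ≤ deg (G j) h)
    (hwk : ∀ c, c ≠ 0 → c ≠ j → deg (G c) l ≤ deg (G c) h + 1) :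
    ∃ m, GC l h G m j := by
  classical
  by_contra hno
  set r : Fin (T+1) → Fin (T+1) → Prop := fun p q => ∃ w, stp l h G p w q with hr
  set R : Finset (Fin (T+1)) := Finset.univ.filter (fun i => Relation.ReflTransGen r j i)
    with hR
  have hjR : j ∈ R := Finset.mem_filter.mpr ⟨Finset.mem_univ _, Relation.ReflTransGen.refl⟩
  have hnotgood : ∀ i ∈ R, ¬ good l h G i := by
    intro i hi hg
    exact hno (reach_gc (Finset.mem_filter.mp hi).2 hg)
  set S : Finset (Fin n) := Finset.univ.filter (fun u => u ≠ l ∧ u ≠ h) with hS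
  have hsplit : ∀ f : Fin n → ℤ, ∑ u, f u = (∑ u ∈ S, f u) + (f l + f h) := by
    intro f
    rw [← Finset.sum_filter_add_sum_filter_not Finset.univ (fun u => u ≠ l ∧ u ≠ h) f]
    congr 1
    have hfe : Finset.univ.filter (fun u : Fin n => ¬(u ≠ l ∧ u ≠ h)) = {l, h} := by
      ext u
      simp only [Finset.mem_filter, Finset.mem_univ, true_and, not_and_or, not_not,
        Finset.mem_insert, Finset.mem_singleton, ne_eq]
    rw [hfe, Finset.sum_pair hlh]
  have hdegS : ∀ i : Fin (T+1), (deg (G i) l : ℤ) - deg (G i) h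
      = ∑ u ∈ S, ((G i l u : ℤ) - G i h u) := by
    intro i
    have e1 : (deg (G i) l : ℤ) - deg (G i) h = ∑ u, ((G i l u : ℤ) - G i h u) := by
      unfold deg
      push_cast
      rw [Finset.sum_sub_distrib]
    rw [e1, hsplit (fun u => (G i l u : ℤ) - G i h u)]
    have hll : G i l l = 0 := hOk.2.1 i l
    have hhh : G i h h = 0 := hOk.2.1 i h
    have hsymi : G i l h = G i h l := hOk.1 i l h
    simp only [hll, hhh, hsymi]
    push_cast
    ring
  have key : ∀ u ∈ S, (0:ℤ) ≤ ∑ i ∈ R, ((G i l u : ℤ) - G i h u) := by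
    intro u hu
    obtain ⟨hul, huh⟩ := (Finset.mem_filter.mp hu).2
    rw [Finset.sum_sub_distrib]
    by_cases hB : ∃ i ∈ R, 1 ≤ G i h u
    · obtain ⟨i₀, hi₀R, hi₀⟩ := hB
      have hall : ∀ i', 1 ≤ G i' l u → i' ∈ R := by
        intro i' hi'
        have hreach : Relation.ReflTransGen r j i₀ := (Finset.mem_filter.mp hi₀R).2
        have hstep : r i₀ i' := ⟨u, hul, huh, hi₀, hi'⟩
        exact Finset.mem_filter.mpr ⟨Finset.mem_univ _, hreach.tail hstep⟩
      have hfull : ∑ i ∈ R, G i l u = lam := by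
        rw [Finset.sum_subset (Finset.subset_univ R) ?_]
        · exact hOk.2.2 l u (fun e => hul e.symm)
        · intro x _ hx
          by_contra hxx
          exact hx (hall x (Nat.one_le_iff_ne_zero.mpr hxx))
      have hle : ∑ i ∈ R, G i h u ≤ lam := by
        calc ∑ i ∈ R, G i h u ≤ ∑ i, G i h u :=
              Finset.sum_le_sum_of_subset (Finset.subset_univ R)
          _ = lam := hOk.2.2 h u (fun e => huh e.symm)
      have e1 : (∑ i ∈ R, ((G i l u : ℕ) : ℤ)) = (lam : ℤ) := by exact_mod_cast hfull
      have e2 : (∑ i ∈ R, ((G i h u : ℕ) : ℤ)) ≤ (lam : ℤ) := by exact_mod_cast hle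
      linarith
    · push_neg at hB
      have e0 : ∑ i ∈ R, ((G i h u : ℕ) : ℤ) = 0 :=
        Finset.sum_eq_zero (fun i hi => by
          have := hB i hi
          have : G i h u = 0 := by omega
          simp [this])
      rw [e0]
      simp only [sub_zero]
      exact Finset.sum_nonneg (fun i _ => by positivity)
  have hD1 : (0:ℤ) ≤ ∑ i ∈ R, ((deg (G i) l : ℤ) - deg (G i) h) := by
    rw [Finset.sum_congr rfl (fun i _ => hdegS i), Finset.sum_comm]
    exact Finset.sum_nonneg (fun u hu => key u hu)
  have hD2 : ∑ i ∈ R, ((deg (G i) l : ℤ) - deg (G i) h) ≤ -2 := by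
    rw [← Finset.sum_erase_add R _ hjR]
    have hjterm : (deg (G j) l : ℤ) - deg (G j) h ≤ -2 := by
      have : (deg (G j) l : ℤ) + 2 ≤ deg (G j) h := by exact_mod_cast hgap
      linarith
    have hothers : ∑ i ∈ R.erase j, ((deg (G i) l : ℤ) - deg (G i) h) ≤ 0 := by
      apply Finset.sum_nonpos
      intro i hi
      have hiR := Finset.mem_erase.mp hi
      have hng := hnotgood i hiR.2
      have hi0 : i ≠ 0 := fun e => hng (Or.inl e)
      have hne : deg (G i) l ≠ deg (G i) h + 1 := fun e => hng (Or.inr e)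
      have hle := hwk i hi0 hiR.1
      have hle2 : deg (G i) l ≤ deg (G i) h := by omega
      have : (deg (G i) l : ℤ) ≤ deg (G i) h := by exact_mod_cast hle2
      linarith
    linarith
  linarith

end ChainExists

lemma deg_congr {f g : Fin n → Fin n → ℕ} (hfg : ∀ u v, f u v = g u v) (v : Fin n) :
    deg f v = deg g v := by
  unfold deg
  exact Finset.sum_congr rfl (fun u _ => hfg v u)

section Transfer

variable {lam : ℕ}

lemma transfer (m : ℕ) :
    ∀ (G : Fin (T+1) → Fin n → Fin n → ℕ) (j : Fin (T+1)) (l h : Fin n),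
    Ok lam G → j ≠ 0 → l ≠ h → deg (G j) l + 2 ≤ deg (G j) h →
    (∀ c, c ≠ 0 → c ≠ j → deg (G c) l ≤ deg (G c) h + 1) →
    GC l h G m j →
    ∃ G' : Fin (T+1) → Fin n → Fin n → ℕ,
      Ok lam G' ∧ (∀ c, siz G' c = siz G c) ∧
      (∀ c v, v ≠ l → v ≠ h → deg (G' c) v = deg (G c) v) ∧
      deg (G' j) l = deg (G j) l + 1 ∧
      deg (G j) h = deg (G' j) h + 1 ∧
      (∀ c, c ≠ 0 → c ≠ j →
        (deg (G' c) l = deg (G c) l ∧ deg (G' c) h = deg (G c) h) ∨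
        (deg (G c) l = deg (G c) h + 1 ∧ deg (G' c) l = deg (G c) h ∧
          deg (G' c) h = deg (G c) l)) := by
  induction m using Nat.strong_induction_on with
  | _ m ih =>
  intro G j l h hOk hj hlh hgap hwk hgc
  by_cases hshort : ∃ m' < m, GC l h G m' j
  · obtain ⟨m', hm', hgc'⟩ := hshort
    exact ih m' hm' G j l h hOk hj hlh hgap hwk hgc'
  cases m with
  | zero =>
    rcases hgc with hgc | hgc
    · exact absurd hgc hj
    · omega
  | succ mk =>
  obtain ⟨w, i₁, hstp, htail⟩ := hgc
  obtain ⟨hwl, hwh, hE1, hE2⟩ := hstp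
  by_cases hi₁j : i₁ = j
  · exact absurd ⟨mk, Nat.lt_succ_self mk, hi₁j ▸ htail⟩ hshort
  -- set up the swap
  have hab : j ≠ i₁ := fun e => hi₁j e.symm
  have hlw : l ≠ w := hwl.symm
  have hhw : h ≠ w := hwh.symm
  have hsym := hOk.1
  have hdiag := hOk.2.1
  set G₁ := flip G j i₁ l h w with hG₁
  have hOk₁ : Ok lam G₁ := by
    refine ⟨flip_symm hab hlh hlw hhw hE1 hE2 hsym,
      flip_loopless hab hlh hlw hhw hE1 hE2 hsym hdiag, ?_⟩
    intro u v huv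
    rw [flip_total hab hlh hlw hhw hE1 hE2 hsym u v]
    exact hOk.2.2 u v huv
  have hsiz₁ : ∀ c, siz G₁ c = siz G c := by
    intro c
    exact flip_siz hab hlh hlw hhw hE1 hE2 hsym c
  have f1 : deg (G₁ j) l = deg (G j) l + 1 := by
    have e := flip_deg hab hlh hlw hhw hE1 hE2 hsym j l
    rw [← hG₁] at e
    simp [hab, hlh, hlw] at e
    omega
  have f2 : deg (G j) h = deg (G₁ j) h + 1 := by
    have e := flip_deg hab hlh hlw hhw hE1 hE2 hsym j h
    rw [← hG₁] at e
    simp [hab, hlh.symm, hhw] at e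
    omega
  have f3 : deg (G₁ i₁) h = deg (G i₁) h + 1 := by
    have e := flip_deg hab hlh hlw hhw hE1 hE2 hsym i₁ h
    rw [← hG₁] at e
    simp [hab.symm, hlh.symm, hhw] at e
    omega
  have f4 : deg (G i₁) l = deg (G₁ i₁) l + 1 := by
    have e := flip_deg hab hlh hlw hhw hE1 hE2 hsym i₁ l
    rw [← hG₁] at e
    simp [hab.symm, hlh, hlw] at e
    omega
  have f5 : ∀ c v, v ≠ l → v ≠ h → deg (G₁ c) v = deg (G c) v := by
    intro c v hvl hvh
    have e := flip_deg hab hlh hlw hhw hE1 hE2 hsym c v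
    rw [← hG₁] at e
    by_cases hvw : v = w
    · subst hvw
      simp [hvl, hvh] at e
      omega
    · simp [hvl, hvh, hvw] at e
      omega
  have f6 : ∀ c, c ≠ j → c ≠ i₁ → ∀ v, deg (G₁ c) v = deg (G c) v := by
    intro c hc1 hc2 v
    exact deg_congr (fun u v' => flip_eq_of_ne hab hlh hlw hhw hE1 hE2 hsym hc1 hc2 u v') v
  by_cases hgood : good l h G i₁
  · -- terminal case
    refine ⟨G₁, hOk₁, hsiz₁, f5, f1, f2, ?_⟩
    intro c hc0 hcj
    by_cases hci₁ : c = i₁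
    · subst hci₁
      rcases hgood with hgood | hgood
      · exact absurd hgood hc0
      · right
        exact ⟨hgood, by omega, by omega⟩
    · left
      exact ⟨f6 c hcj hci₁ l, f6 c hcj hci₁ h⟩
  · -- recursive case
    have hi₁0 : i₁ ≠ 0 := fun e => hgood (Or.inl e)
    have hsafe' : deg (G i₁) l ≠ deg (G i₁) h + 1 := fun e => hgood (Or.inr e)
    have hle : deg (G i₁) l ≤ deg (G i₁) h := by
      have := hwk i₁ hi₁0 hi₁j
      omega
    have hgap₁ : deg (G₁ i₁) l + 2 ≤ deg (G₁ i₁) h := by omega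
    have hwk₁ : ∀ c, c ≠ 0 → c ≠ i₁ → deg (G₁ c) l ≤ deg (G₁ c) h + 1 := by
      intro c hc0 hci₁
      by_cases hcj : c = j
      · subst hcj; omega
      · rw [f6 c hcj hci₁ l, f6 c hcj hci₁ h]
        exact hwk c hc0 hcj
    -- get a chain for i₁ in G₁
    cases mk with
    | zero => exact absurd htail hgood
    | succ mk2 =>
    obtain ⟨w₂, i₂, hstp₂, htail₂⟩ := htail
    by_cases hi₂j : i₂ = j
    · exact absurd ⟨mk2, by omega, hi₂j ▸ htail₂⟩ hshort
    by_cases hi₂i₁ : i₂ = i₁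
    · exact absurd ⟨mk2+1, by omega, ⟨w, i₁, ⟨hwl, hwh, hE1, hE2⟩, hi₂i₁ ▸ htail₂⟩⟩ hshort
    have hsame : ∀ c, c ≠ j → c ≠ i₁ → G₁ c = G c := by
      intro c hc1 hc2
      funext u v
      exact flip_eq_of_ne hab hlh hlw hhw hE1 hE2 hsym hc1 hc2 u v
    rcases persist l h j i₁ hsame mk2 i₂ htail₂ with
      ⟨M', hM', hgc'⟩ | ⟨M', hM', hgc'⟩ | ⟨_, _, hgc₁⟩
    · exact absurd ⟨M', by omega, hgc'⟩ hshort
    · exact absurd ⟨M'+1, by omega, ⟨w, i₁, ⟨hwl, hwh, hE1, hE2⟩, hgc'⟩⟩ hshort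
    · -- reattach head step in G₁
      obtain ⟨hw₂l, hw₂h, hF1, hF2⟩ := hstp₂
      have hstp₁ : stp l h G₁ i₁ w₂ i₂ := by
        refine ⟨hw₂l, hw₂h, ?_, ?_⟩
        · exact le_trans hF1 (flip_row_b_h hab hlh hlw hhw hE1 hE2 hsym w₂)
        · rw [hsame i₂ hi₂j hi₂i₁]
          exact hF2
      have hgc₁' : GC l h G₁ (mk2+1) i₁ := ⟨w₂, i₂, hstp₁, hgc₁⟩
      obtain ⟨G', hOk', hsiz', hdeg', hjl', hjh', hopt'⟩ :=
        ih (mk2+1) (by omega) G₁ i₁ l h hOk₁ hi₁0 hlh hgap₁ hwk₁ hgc₁'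
      refine ⟨G', hOk', ?_, ?_, ?_, ?_, ?_⟩
      · intro c; rw [hsiz' c, hsiz₁ c]
      · intro c v hvl hvh; rw [hdeg' c v hvl hvh, f5 c v hvl hvh]
      · -- deg (G' j) l = deg (G j) l + 1
        rcases hopt' j hj hab with ⟨e1, _⟩ | ⟨e1, _, _⟩
        · omega
        · omega
      · rcases hopt' j hj hab with ⟨_, e2⟩ | ⟨e1, _, _⟩
        · omega
        · omega
      · intro c hc0 hcj
        by_cases hci₁ : c = i₁
        · subst hci₁
          left
          constructor
          · omega
          · omega
        · rcases hopt' c hc0 hci₁ with ⟨e1, e2⟩ | ⟨e1, e2, e3⟩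
          · left
            rw [e1, e2, f6 c hcj hci₁ l, f6 c hcj hci₁ h]
            exact ⟨rfl, rfl⟩
          · right
            simp only [f6 c hcj hci₁ l, f6 c hcj hci₁ h] at e1 e2 e3
            exact ⟨e1, e2, e3⟩
end Transfer

lemma sum_split_pair {M : Type*} [AddCommMonoid M] {l h : Fin n} (hlh : l ≠ h)
    (f : Fin n → M) :
    ∑ v, f v = (∑ v ∈ Finset.univ.filter (fun u => u ≠ l ∧ u ≠ h), f v) + (f l + f h) := by
  rw [← Finset.sum_filter_add_sum_filter_not Finset.univ (fun u => u ≠ l ∧ u ≠ h) f]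
  congr 1
  have hfe : Finset.univ.filter (fun u : Fin n => ¬(u ≠ l ∧ u ≠ h)) = {l, h} := by
    ext u
    simp only [Finset.mem_filter, Finset.mem_univ, true_and, not_and_or, not_not,
      Finset.mem_insert, Finset.mem_singleton, ne_eq]
  rw [hfe, Finset.sum_pair hlh]

section Repair

variable {lam : ℕ}

lemma repair (Φ : ℕ) :
    ∀ (G : Fin (T+1) → Fin n → Fin n → ℕ) (j : Fin (T+1)),
    Ok lam G → j ≠ 0 → (∀ c, c ≠ 0 → c ≠ j → Bal (G c)) →
    (∑ v, (deg (G j) v)^2 ≤ Φ) →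
    ∃ G' : Fin (T+1) → Fin n → Fin n → ℕ,
      Ok lam G' ∧ (∀ c, siz G' c = siz G c) ∧ (∀ c, c ≠ 0 → Bal (G' c)) := by
  induction Φ using Nat.strong_induction_on with
  | _ Φ ihΦ =>
  intro G j hOk hj hbals hΦ
  by_cases hbal : Bal (G j)
  · refine ⟨G, hOk, fun c => rfl, ?_⟩
    intro c hc0
    by_cases hcj : c = j
    · exact hcj ▸ hbal
    · exact hbals c hc0 hcj
  · -- find an imbalance
    unfold Bal at hbal
    push_neg at hbal
    obtain ⟨h, l, hxy⟩ := hbal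
    have hgap : deg (G j) l + 2 ≤ deg (G j) h := by omega
    have hlh : l ≠ h := by
      intro e
      rw [e] at hgap
      omega
    have hwk : ∀ c, c ≠ 0 → c ≠ j → deg (G c) l ≤ deg (G c) h + 1 :=
      fun c hc0 hcj => hbals c hc0 hcj l h
    obtain ⟨m, hgc⟩ := chain_exists hOk hlh hj hgap hwk
    obtain ⟨G', hOk', hsiz', hdeg', hl', hh', hopt'⟩ :=
      transfer m G j l h hOk hj hlh hgap hwk hgc
    -- other colors stay balanced
    have hbals' : ∀ c, c ≠ 0 → c ≠ j → Bal (G' c) := by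
      intro c hc0 hcj
      rcases hopt' c hc0 hcj with ⟨e1, e2⟩ | ⟨e0, e1, e2⟩
      · have hall : ∀ v, deg (G' c) v = deg (G c) v := by
          intro v
          by_cases hvl : v = l
          · exact hvl ▸ e1
          by_cases hvh : v = h
          · exact hvh ▸ e2
          · exact hdeg' c v hvl hvh
        intro x y
        rw [hall x, hall y]
        exact hbals c hc0 hcj x y
      · set σ : Fin n → Fin n := fun v => if v = l then h else if v = h then l else v with hσ
        have hall : ∀ v, deg (G' c) v = deg (G c) (σ v) := by
          intro v
          by_cases hvl : v = l
          · simp only [hσ, if_pos hvl]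
            rw [hvl]
            exact e1
          by_cases hvh : v = h
          · simp only [hσ, if_neg hvl, if_pos hvh]
            rw [hvh]
            exact e2
          · simp only [hσ, if_neg hvl, if_neg hvh]
            exact hdeg' c v hvl hvh
        intro x y
        rw [hall x, hall y]
        exact hbals c hc0 hcj (σ x) (σ y)
    -- potential strictly decreases
    have hless : ∑ v, (deg (G' j) v)^2 < ∑ v, (deg (G j) v)^2 := by
      rw [sum_split_pair hlh (fun v => (deg (G' j) v)^2),
        sum_split_pair hlh (fun v => (deg (G j) v)^2)]
      have hrest : ∑ v ∈ Finset.univ.filter (fun u => u ≠ l ∧ u ≠ h), (deg (G' j) v)^2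
          = ∑ v ∈ Finset.univ.filter (fun u => u ≠ l ∧ u ≠ h), (deg (G j) v)^2 := by
        apply Finset.sum_congr rfl
        intro v hv
        obtain ⟨hvl, hvh⟩ := (Finset.mem_filter.mp hv).2
        rw [hdeg' j v hvl hvh]
      rw [hrest]
      have hkey : (deg (G' j) l)^2 + (deg (G' j) h)^2
          < (deg (G j) l)^2 + (deg (G j) h)^2 := by
        nlinarith [hl', hh', hgap]
      omega
    exact ihΦ (∑ v, (deg (G' j) v)^2) (by omega) G' j hOk' hj hbals'
      (le_refl _) |>.imp (fun G'' ⟨a, b, c⟩ => ⟨a, fun cc => (b cc).trans (hsiz' cc), c⟩)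

end Repair

section Main

variable {lam : ℕ}

def TotCap (n lam : ℕ) : ℕ := ∑ u : Fin n, ∑ v : Fin n, (if u = v then 0 else lam)

lemma siz_sum {G : Fin (T+1) → Fin n → Fin n → ℕ} (hOk : Ok lam G) :
    ∑ c, siz G c = TotCap n lam := by
  unfold siz TotCap
  rw [Finset.sum_comm]
  apply Finset.sum_congr rfl; intro u _
  rw [Finset.sum_comm]
  apply Finset.sum_congr rfl; intro v _
  by_cases huv : u = v
  · simp only [huv, if_pos rfl]
    exact Finset.sum_eq_zero (fun c _ => hOk.2.1 c v)
  · rw [if_neg huv]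
    exact hOk.2.2 u v huv

lemma main : ∀ m (r : Fin T → ℕ), (∑ j, r j) = m → 2 * m ≤ TotCap n lam →
    ∃ G : Fin (T+1) → Fin n → Fin n → ℕ, Ok lam G ∧ (∀ c, c ≠ 0 → Bal (G c)) ∧
      (∀ j : Fin T, siz G j.succ = 2 * r j) := by
  intro m
  induction m with
  | zero =>
    intro r hr _
    refine ⟨fun c u v => if c = 0 ∧ u ≠ v then lam else 0, ⟨?_, ?_, ?_⟩, ?_, ?_⟩
    · intro c u v
      exact if_congr (by constructor <;> (rintro ⟨h1, h2⟩; exact ⟨h1, h2.symm⟩)) rfl rfl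
    · intro c v; simp
    · intro u v huv
      rw [Fin.sum_univ_succ]
      simp [huv, Fin.succ_ne_zero]
    · intro c hc0 x y
      have hz : deg (fun u v : Fin n => if c = 0 ∧ u ≠ v then lam else 0) x = 0 := by
        unfold deg
        exact Finset.sum_eq_zero (fun u _ => by simp [hc0])
      rw [hz]
      omega
    · intro j
      have hrj : r j = 0 := by
        have := Finset.sum_eq_zero_iff.mp hr j (Finset.mem_univ j)
        exact this
      unfold siz
      rw [hrj]
      simp [Fin.succ_ne_zero]
  | succ m ihm =>
    intro r hr hcap
    have hex : ∃ j₀, r j₀ ≠ 0 := by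
      by_contra hno
      push_neg at hno
      have : ∑ j, r j = 0 := Finset.sum_eq_zero (fun j _ => hno j)
      omega
    obtain ⟨j₀, hj₀⟩ := hex
    set r' := Function.update r j₀ (r j₀ - 1) with hr'def
    have hup : r' j₀ = r j₀ - 1 := Function.update_self j₀ (r j₀ - 1) r
    have hsum' : ∑ j, r' j = m := by
      have h1 : ∑ j ∈ Finset.univ.erase j₀, r' j + r' j₀ = ∑ j, r' j :=
        Finset.sum_erase_add _ _ (Finset.mem_univ j₀)
      have h2 : ∑ j ∈ Finset.univ.erase j₀, r j + r j₀ = ∑ j, r j :=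
        Finset.sum_erase_add _ _ (Finset.mem_univ j₀)
      have h3 : ∑ j ∈ Finset.univ.erase j₀, r' j = ∑ j ∈ Finset.univ.erase j₀, r j := by
        apply Finset.sum_congr rfl
        intro j hj
        exact Function.update_of_ne (Finset.ne_of_mem_erase hj) _ r
      omega
    obtain ⟨G, hOk, hbal, hsiz⟩ := ihm r' hsum' (by omega)
    have hsum0 : siz G 0 + 2 * m = TotCap n lam := by
      have h1 := siz_sum hOk
      rw [Fin.sum_univ_succ] at h1
      have h2 : ∑ j : Fin T, siz G j.succ = ∑ j : Fin T, 2 * r' j :=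
        Finset.sum_congr rfl (fun j _ => hsiz j)
      rw [h2, ← Finset.mul_sum, hsum'] at h1
      omega
    have hslack : siz G 0 ≠ 0 := by omega
    have hslack' : ∑ u, (∑ v, G 0 u v) ≠ 0 := hslack
    obtain ⟨u, _, hu⟩ := Finset.exists_ne_zero_of_sum_ne_zero hslack'
    obtain ⟨v, _, hv⟩ := Finset.exists_ne_zero_of_sum_ne_zero hu
    have huv : u ≠ v := by
      intro e
      apply hv
      rw [e]
      exact hOk.2.1 0 v
    have hE : 1 ≤ G 0 u v := Nat.one_le_iff_ne_zero.mpr hv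
    have hc01 : (0 : Fin (T+1)) ≠ j₀.succ := (Fin.succ_ne_zero j₀).symm
    have hsym := hOk.1
    set Gp := move G 0 j₀.succ u v with hGp
    have hOkp : Ok lam Gp := by
      refine ⟨move_symm hsym, move_loopless huv hOk.2.1, ?_⟩
      intro a b hab
      rw [hGp, move_total hc01 huv hE hsym a b]
      exact hOk.2.2 a b hab
    have hsizp : ∀ j : Fin T, siz Gp j.succ = 2 * r j := by
      intro j
      have e := move_siz hc01 huv hE hsym j.succ
      rw [if_neg (Fin.succ_ne_zero j)] at e
      by_cases hjj : j = j₀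
      · subst hjj
        rw [if_pos rfl] at e
        have := hsiz j
        unfold siz at this ⊢
        rw [hGp]
        omega
      · rw [if_neg (fun hh => hjj (Fin.succ_inj.mp hh))] at e
        have h4 := hsiz j
        have h5 : r' j = r j := Function.update_of_ne hjj _ r
        unfold siz at h4 ⊢
        rw [hGp]
        omega
    have hbalp : ∀ c, c ≠ 0 → c ≠ j₀.succ → Bal (Gp c) := by
      intro c hc0 hcj x y
      have hdg : ∀ z, deg (Gp c) z = deg (G c) z :=
        deg_congr (move_eq_of_ne hc0 hcj)
      rw [hdg x, hdg y]
      exact hbal c hc0 x y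
    obtain ⟨G', hOk', hsiz', hbal'⟩ :=
      repair (∑ w, (deg (Gp j₀.succ) w)^2) Gp j₀.succ hOkp (Fin.succ_ne_zero j₀) hbalp
        (le_refl _)
    exact ⟨G', hOk', hbal', fun j => (hsiz' j.succ).trans (hsizp j)⟩

lemma TotCap_eq (hn : 0 < n) : TotCap n lam = lam * (n * (n-1)) := by
  unfold TotCap
  have hrow : ∀ u : Fin n, ∑ v : Fin n, (if u = v then 0 else lam) = lam * (n-1) := by
    intro u
    have h1 : ∑ v : Fin n, ((if u = v then (0:ℕ) else lam) + (if u = v then lam else 0))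
        = ∑ v : Fin n, lam :=
      Finset.sum_congr rfl (fun v _ => by by_cases h : u = v <;> simp [h])
    rw [Finset.sum_add_distrib, Finset.sum_ite_eq] at h1
    simp only [Finset.mem_univ, if_pos, Finset.sum_const, Finset.card_univ,
      Fintype.card_fin, smul_eq_mul] at h1
    have h2 : lam * (n-1) + lam = n * lam := by
      cases n with
      | zero => omega
      | succ k =>
        simp only [Nat.succ_sub_one]
        ring
    omega
  rw [Finset.sum_congr rfl (fun u _ => hrow u), Finset.sum_const, Finset.card_univ,
    Fintype.card_fin, smul_eq_mul]
  ring

end Main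

end Stmt10

/-- Bryant: Let `n, λ, t` be positive integers and `r : Fin t → ℕ` with
`∑ r j ≤ λ * n(n-1)/2`.  Then there is an almost-regular partial decomposition of `λK_n`
into `t` colors in which color `j` uses exactly `r j` edges: a family `G` of symmetric
loopless multiplicity functions, pointwise summing to at most `λK_n`, with
`∑ u ∑ v, G j u v = 2 * r j` (twice the edge count) and `|d_j(x) - d_j(y)| ≤ 1` for all
vertices `x, y` and every color `j`. -/
theorem stmt10 (n lam t : ℕ) (hn : 0 < n) (hlam : 0 < lam) (ht : 0 < t)
    (r : Fin t → ℕ) (hsum : ∑ j, r j ≤ lam * (n * (n - 1) / 2)) :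
    ∃ G : Fin t → Fin n → Fin n → ℕ,
      (∀ j u v, G j u v = G j v u) ∧
      (∀ j v, G j v v = 0) ∧
      (∀ u v, u ≠ v → ∑ j, G j u v ≤ lam) ∧
      (∀ j, (∑ u, ∑ v, G j u v) = 2 * r j) ∧
      (∀ j x y, deg (G j) x ≤ deg (G j) y + 1) := by
  classical
  have heven : 2 ∣ n * (n - 1) := by
    cases n with
    | zero => simp
    | succ k =>
      simp only [Nat.succ_sub_one]
      rcases Nat.even_or_odd k with he | ho
      · exact Dvd.dvd.mul_left he.two_dvd (k+1)
      · exact Dvd.dvd.mul_right (Odd.add_one ho).two_dvd k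
  have hdv : 2 * (n * (n - 1) / 2) = n * (n - 1) := Nat.mul_div_cancel' heven
  have hcap : 2 * (∑ j, r j) ≤ Stmt10.TotCap n lam := by
    rw [Stmt10.TotCap_eq hn]
    calc 2 * (∑ j, r j) ≤ 2 * (lam * (n * (n - 1) / 2)) := by omega
      _ = lam * (2 * (n * (n - 1) / 2)) := by ring
      _ = lam * (n * (n-1)) := by rw [hdv]
  obtain ⟨G, hOk, hbal, hsiz⟩ := Stmt10.main (T := t) (∑ j, r j) r rfl hcap
  refine ⟨fun j => G j.succ, ?_, ?_, ?_, ?_, ?_⟩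
  · intro j u v; exact hOk.1 j.succ u v
  · intro j v; exact hOk.2.1 j.succ v
  · intro u v huv
    show ∑ j : Fin t, G j.succ u v ≤ lam
    have h1 := hOk.2.2 u v huv
    rw [Fin.sum_univ_succ] at h1
    omega
  · intro j; exact hsiz j
  · intro j x y; exact hbal j.succ (Fin.succ_ne_zero j) x y
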